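/- Let G be a simple graph on Fin n, f_G its MaxCut objective, and φ : G ≃g G a graph automorphism. Then f_G (fun i => x (φ i)) = f_G x for every x : X, and consequently, taking C := Matrix.diagonal (fun x => (f_G x : ℂ)), for every depth p : ℕ, all parameters β γ : Fin p → ℝ, and every x : X, the QAOA measurement probabilities satisfy Pr(x) = Pr(fun i => x (φ i)). -/

import Mathlib

/-!
An automorphism `φ` permutes the edges of `G`, so `f_G (x ∘ φ) = f_G x`. Let `P` be the
permutation matrix of the relabelling `x ↦ x ∘ φ` of bitstrings. It commutes with the diagonal
cost Hamiltonian `C` because `f_G` is invariant, and with the mixer `B` because relabelling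
qubits preserves Hamming distance; hence it commutes with every QAOA layer. Since `P` also fixes
the uniform state, `P ψ = ψ`: the amplitudes themselves, not only the probabilities, agree at
`x` and `x ∘ φ`.
-/

/-- Permutation matrix of a permutation `a` of a finite type `X`:
`(P a) x y = 1` if `x = a y` and `0` otherwise. -/
noncomputable def permMatrix {X : Type*} [Fintype X] [DecidableEq X] (a : Equiv.Perm X) :
    Matrix X X ℂ :=
  Matrix.of fun x y => if x = a y then 1 else 0

/-- The transverse-field mixing Hamiltonian `B = ∑_j X_j` in the computational basis:
`B x y = 1` if the bitstrings `x` and `y` differ in exactly one coordinate, else `0`. -/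
noncomputable def mixerB (n : ℕ) : Matrix (Fin n → Bool) (Fin n → Bool) ℂ :=
  Matrix.of fun x y => if (Finset.univ.filter fun i => x i ≠ y i).card = 1 then 1 else 0

/-- The diagonal objective Hamiltonian `C` of an objective function `f`. -/
noncomputable def objC (n : ℕ) (f : (Fin n → Bool) → ℝ) :
    Matrix (Fin n → Bool) (Fin n → Bool) ℂ :=
  Matrix.diagonal fun x => (f x : ℂ)

/-- The uniform superposition initial state. -/
noncomputable def uniformState (n : ℕ) : (Fin n → Bool) → ℂ :=
  fun _ => ((1 / Real.sqrt (2 ^ n) : ℝ) : ℂ)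

/-- The depth-`p` QAOA state with parameters `β γ : Fin p → ℝ`: the layers
`exp (-i γ_j C)` then `exp (-i β_j B)` are applied to the uniform initial state
in order `j = 1, …, p`. -/
noncomputable def qaoaState (n : ℕ) (f : (Fin n → Bool) → ℝ) (p : ℕ) (β γ : Fin p → ℝ) :
    (Fin n → Bool) → ℂ :=
  (((List.finRange p).map fun j =>
      NormedSpace.exp ((-(β j : ℂ) * Complex.I) • mixerB n) *
        NormedSpace.exp ((-(γ j : ℂ) * Complex.I) • objC n f)).reverse.prod).mulVec
    (uniformState n)

/-- The MaxCut objective of a simple graph `G` on `Fin n`: the number of edges `{u, v}`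
of `G` with `x u ≠ x v`. -/
noncomputable def maxCutObj {n : ℕ} (G : SimpleGraph (Fin n)) (x : Fin n → Bool) : ℕ :=
  {e | e ∈ G.edgeSet ∧ ¬ (Sym2.map x e).IsDiag}.ncard

section PermInvariant

open scoped Matrix

variable {X : Type*} [Fintype X] [DecidableEq X]

theorem permMatrix_eq_toMatrix (a : Equiv.Perm X) :
    permMatrix a = a.symm.toPEquiv.toMatrix := by
  ext x y
  simp [permMatrix, Equiv.eq_symm_apply, eq_comm]

theorem permMatrix_mulVec (a : Equiv.Perm X) (v : X → ℂ) :
    permMatrix a *ᵥ v = v ∘ a.symm := by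
  rw [permMatrix_eq_toMatrix, PEquiv.toMatrix_toPEquiv_mulVec]

theorem commute_permMatrix_of_submatrix_eq {a : Equiv.Perm X} {M : Matrix X X ℂ}
    (h : M.submatrix a a = M) : Commute (permMatrix a) M := by
  rw [Commute, SemiconjBy, permMatrix_eq_toMatrix, PEquiv.toMatrix_toPEquiv_mul,
    PEquiv.mul_toMatrix_toPEquiv]
  conv_lhs => rw [← h, Matrix.submatrix_submatrix]
  ext x y
  simp

theorem mulVec_apply_perm_of_commute {a : Equiv.Perm X} {U : Matrix X X ℂ}
    (hU : Commute (permMatrix a) U) {v : X → ℂ} (hv : ∀ x, v (a x) = v x) (x : X) :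
    (U *ᵥ v) (a x) = (U *ᵥ v) x := by
  have hPv : permMatrix a *ᵥ v = v := by
    funext y
    simpa [permMatrix_mulVec] using (hv (a.symm y)).symm
  calc (U *ᵥ v) (a x) = (U *ᵥ (permMatrix a *ᵥ v)) (a x) := by rw [hPv]
    _ = (permMatrix a *ᵥ (U *ᵥ v)) (a x) := by
      rw [Matrix.mulVec_mulVec, Matrix.mulVec_mulVec, hU.eq]
    _ = (U *ᵥ v) x := by
      rw [permMatrix_mulVec, Function.comp_apply, Equiv.symm_apply_apply]

end PermInvariant

section QAOA

variable {n : ℕ}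

def bitstringPerm (e : Equiv.Perm (Fin n)) : Equiv.Perm (Fin n → Bool) :=
  e.symm.arrowCongr (Equiv.refl Bool)

@[simp]
theorem bitstringPerm_apply (e : Equiv.Perm (Fin n)) (x : Fin n → Bool) :
    bitstringPerm e x = fun i => x (e i) :=
  rfl

theorem mixerB_submatrix_bitstringPerm (e : Equiv.Perm (Fin n)) :
    (mixerB n).submatrix (bitstringPerm e) (bitstringPerm e) = mixerB n := by
  ext x y
  have hcard : (Finset.univ.filter fun i => x (e i) ≠ y (e i)).card
      = (Finset.univ.filter fun i => x i ≠ y i).card :=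
    Finset.card_equiv e fun i => by simp
  simp only [mixerB, Matrix.submatrix_apply, Matrix.of_apply, bitstringPerm_apply, hcard]

theorem objC_submatrix {f : (Fin n → Bool) → ℝ} {σ : Equiv.Perm (Fin n → Bool)}
    (hf : ∀ x, f (σ x) = f x) : (objC n f).submatrix σ σ = objC n f := by
  simp only [objC, Matrix.submatrix_diagonal_equiv, Function.comp_def, hf]

theorem qaoaState_apply_perm {f : (Fin n → Bool) → ℝ} (e : Equiv.Perm (Fin n))
    (hf : ∀ x, f (fun i => x (e i)) = f x) (p : ℕ) (β γ : Fin p → ℝ) (x : Fin n → Bool) :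
    qaoaState n f p β γ (fun i => x (e i)) = qaoaState n f p β γ x := by
  set σ := bitstringPerm e
  have hB := commute_permMatrix_of_submatrix_eq (mixerB_submatrix_bitstringPerm e)
  have hC := commute_permMatrix_of_submatrix_eq (a := σ) (objC_submatrix hf)
  refine mulVec_apply_perm_of_commute (a := σ) (v := uniformState n)
    (Commute.list_prod_right _ _ ?_) (fun _ => rfl) x
  simp only [List.mem_reverse, List.mem_map, List.mem_finRange, true_and]
  rintro _ ⟨j, rfl⟩
  exact ((hB.smul_right _).exp_right).mul_right ((hC.smul_right _).exp_right)

end QAOA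

theorem maxCutObj_comp_iso {n : ℕ} {G H : SimpleGraph (Fin n)} (φ : G ≃g H)
    (x : Fin n → Bool) : maxCutObj G (fun i => x (φ i)) = maxCutObj H x := by
  have hpre : {e | e ∈ G.edgeSet ∧ ¬ (Sym2.map (fun i => x (φ i)) e).IsDiag}
      = Sym2.map φ ⁻¹' {e | e ∈ H.edgeSet ∧ ¬ (Sym2.map x e).IsDiag} := by
    ext e
    induction e using Sym2.ind with
    | _ u v => simp [φ.map_adj_iff]
  rw [maxCutObj, maxCutObj, hpre]
  refine Set.ncard_preimage_of_injective_subset_range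
    (Sym2.map.injective φ.injective) fun e _ => ?_
  induction e using Sym2.ind with
  | _ u v => exact ⟨s(φ.symm u, φ.symm v), by simp⟩

/-- Corollary 2: a graph automorphism `φ : G ≃g G` leaves the MaxCut objective invariant,
and consequently QAOA measurement probabilities satisfy `Pr x = Pr (fun i => x (φ i))`
for every depth, all parameters, and every bitstring. -/
theorem maxcut_graph_automorphism_symmetry (n : ℕ) (G : SimpleGraph (Fin n)) (φ : G ≃g G) :
    (∀ x : Fin n → Bool, maxCutObj G (fun i => x (φ i)) = maxCutObj G x) ∧
    (∀ (p : ℕ) (β γ : Fin p → ℝ) (x : Fin n → Bool),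
      ‖qaoaState n (fun y => (maxCutObj G y : ℝ)) p β γ x‖ ^ 2
        = ‖qaoaState n (fun y => (maxCutObj G y : ℝ)) p β γ (fun i => x (φ i))‖ ^ 2) := by
  refine ⟨maxCutObj_comp_iso φ, fun p β γ x => ?_⟩
  have hf (y : Fin n → Bool) : (maxCutObj G fun i => y (φ i) : ℝ) = maxCutObj G y :=
    congrArg Nat.cast (maxCutObj_comp_iso φ y)
  exact congrArg (‖·‖ ^ 2) (qaoaState_apply_perm φ.toEquiv hf p β γ x).symm
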